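/- arXiv:1802.07796 — 7 statements merged into one kernel-verified Lean document; each statement's English description precedes it below -/
import Mathlib

section
/- The continuous relaxation is tight: there exists a labeling s* ∈ ∏_{i∈V} S_i such that E(δ(s*)) ≤ E(x) for every x ∈ X; consequently the minimum of E over the relaxed feasible set X is attained and equals the minimum of the discrete MRF energy Σ_{k∈K} f_k(s|_{C_k}) over all labelings s. -/
/-!
Under a relaxed point `x ∈ X`, the product `∏ i, x i (s i)` is a probability distribution on
labelings, and since each row of `x` sums to one, marginalising away the nodes outside a clique
shows that `E x` is the expected discrete energy under it. An expectation is at least the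
minimum, and the minimum is attained by the indicator vector of a minimizing labeling.
-/

open Finset

namespace MRF

variable {V : Type*} [Fintype V] [DecidableEq V] {S : V → Type*} [∀ i, Fintype (S i)]
  {K : Type*} [Fintype K]

section Energy

variable {R : Type*} (C : K → Finset V) (f : (k : K) → ((i : C k) → S i.1) → R)

def relaxedEnergy [CommSemiring R] (x : (i : V) → S i → R) : R :=
  ∑ k, ∑ a : (i : C k) → S i.1, f k a * ∏ i : C k, x i.1 (a i)

def labelingEnergy [AddCommMonoid R] (s : (i : V) → S i) : R :=
  ∑ k, f k (fun i => s i.1)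

end Energy

variable {R : Type*} [CommSemiring R]

theorem sum_prod_eq_one {x : (i : V) → S i → R} (hx : ∀ i, ∑ t, x i t = 1) :
    ∑ s : (i : V) → S i, ∏ i, x i (s i) = 1 := by
  rw [← Fintype.prod_sum]
  simp [hx]

theorem sum_comp_restrict_mul_prod (C : Finset V) (g : ((i : C) → S i.1) → R)
    {x : (i : V) → S i → R} (hx : ∀ i, ∑ t, x i t = 1) :
    ∑ s : (i : V) → S i, g (fun i => s i.1) * ∏ i, x i (s i)
      = ∑ a : (i : C) → S i.1, g a * ∏ i : C, x i.1 (a i) := by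
  let e := Equiv.piEquivPiSubtypeProd (· ∈ C) S
  have split (a : (i : C) → S i.1) (b : (i : {i // i ∉ C}) → S i.1) :
      g (fun i => e.symm (a, b) i.1) * ∏ i, x i (e.symm (a, b) i)
        = g a * (∏ i : C, x i.1 (a i)) * ∏ i : {i // i ∉ C}, x i.1 (b i) := by
    have on_C (i : C) : e.symm (a, b) i = a i := by simp [e, i.2]
    have off_C (i : {i // i ∉ C}) : e.symm (a, b) i = b i := by simp [e, i.2]
    rw [← Fintype.prod_subtype_mul_prod_subtype (· ∈ C), mul_assoc]
    simp only [on_C, off_C]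
    congr!
  rw [← e.symm.sum_comp, Fintype.sum_prod_type]
  simp only [split, ← mul_sum, sum_prod_eq_one (fun i : {i // i ∉ C} => hx i), mul_one]

theorem relaxedEnergy_eq_sum_prod_mul_labelingEnergy (C : K → Finset V)
    (f : (k : K) → ((i : C k) → S i.1) → R) {x : (i : V) → S i → R}
    (hx : ∀ i, ∑ t, x i t = 1) :
    relaxedEnergy C f x = ∑ s : (i : V) → S i, (∏ i, x i (s i)) * labelingEnergy C f s := by
  simp only [relaxedEnergy, labelingEnergy, mul_sum, ← sum_comp_restrict_mul_prod _ _ hx]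
  rw [sum_comm]
  simp only [mul_comm]

theorem relaxedEnergy_indicator [∀ i, DecidableEq (S i)]
    (C : K → Finset V) (f : (k : K) → ((i : C k) → S i.1) → R) (s : (i : V) → S i) :
    relaxedEnergy C f (fun i t => if t = s i then 1 else 0) = labelingEnergy C f s := by
  refine sum_congr rfl fun k _ => ?_
  have indicator_prod (a : (i : C k) → S i.1) :
      (∏ i : C k, if a i = s i then (1 : R) else 0) = if a = fun i : C k => s i then 1 else 0 := by
    simp [prod_boole, funext_iff]
  simp only [indicator_prod, mul_ite, mul_one, mul_zero, Fintype.sum_ite_eq']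

theorem le_relaxedEnergy [PartialOrder R] [IsOrderedRing R]
    (C : K → Finset V) (f : (k : K) → ((i : C k) → S i.1) → R) {m : R}
    (hm : ∀ s, m ≤ labelingEnergy C f s) {x : (i : V) → S i → R} (hx_nonneg : ∀ i t, 0 ≤ x i t)
    (hx : ∀ i, ∑ t, x i t = 1) :
    m ≤ relaxedEnergy C f x := by
  rw [relaxedEnergy_eq_sum_prod_mul_labelingEnergy C f hx]
  calc m = ∑ s : (i : V) → S i, (∏ i, x i (s i)) * m := by
        rw [← sum_mul, sum_prod_eq_one hx, one_mul]
    _ ≤ _ := sum_le_sum fun s _ =>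
        mul_le_mul_of_nonneg_left (hm s) (prod_nonneg fun i _ => hx_nonneg i (s i))

end MRF

theorem stmt2_general (V : Type) [Fintype V] [DecidableEq V]
    (S : V → Type) [∀ i, Fintype (S i)] [∀ i, DecidableEq (S i)] [∀ i, Nonempty (S i)]
    (K : Type) [Fintype K] (C : K → Finset V)
    (f : (k : K) → ((i : C k) → S i.1) → ℝ)
    (E : ((i : V) → S i → ℝ) → ℝ)
    (hE : ∀ x, E x = ∑ k, ∑ s : (i : C k) → S i.1, f k s * ∏ i : C k, x i.1 (s i))
    (X : Set ((i : V) → S i → ℝ))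
    (hX : X = {x | ∀ i, (∀ t, 0 ≤ x i t) ∧ (∑ t, x i t) = 1})
    (δ : ((i : V) → S i) → ((i : V) → S i → ℝ))
    (hδ : ∀ s i t, δ s i t = if t = s i then (1 : ℝ) else 0) :
    ∃ sstar : (i : V) → S i, δ sstar ∈ X ∧
      (∀ x ∈ X, E (δ sstar) ≤ E x) ∧
      (∀ s : (i : V) → S i,
        (∑ k, f k (fun i => sstar i.1)) ≤ ∑ k, f k (fun i => s i.1)) ∧
      E (δ sstar) = ∑ k, f k (fun i => sstar i.1) := by
  obtain ⟨sstar, hmin⟩ := Finite.exists_min (MRF.labelingEnergy C f)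
  obtain rfl : E = MRF.relaxedEnergy C f := funext hE
  obtain rfl : δ = fun s i t => if t = s i then 1 else 0 := funext₃ hδ
  have hE_sstar := MRF.relaxedEnergy_indicator C f sstar
  subst hX
  refine ⟨sstar, fun i => ⟨fun t => ?_, by simp⟩, fun x hx => ?_, hmin, hE_sstar⟩
  · dsimp only
    split_ifs <;> norm_num
  · rw [hE_sstar]
    exact MRF.le_relaxedEnergy C f hmin (fun i => (hx i).1) (fun i => (hx i).2)

/-- Tightness of the continuous relaxation: some labeling's indicator vector
minimizes `E` over the relaxed feasible set `X`, so the minimum of `E` over `X`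
is attained and equals the minimum of the discrete MRF energy over labelings. -/
theorem stmt2 (V : Type) [Fintype V] [DecidableEq V] [Nonempty V]
    (S : V → Type) [∀ i, Fintype (S i)] [∀ i, DecidableEq (S i)] [∀ i, Nonempty (S i)]
    (K : Type) [Fintype K] (C : K → Finset V)
    (f : (k : K) → ((i : C k) → S i.1) → ℝ)
    (E : ((i : V) → S i → ℝ) → ℝ)
    (hE : ∀ x, E x = ∑ k, ∑ s : (i : C k) → S i.1, f k s * ∏ i : C k, x i.1 (s i))
    (X : Set ((i : V) → S i → ℝ))
    (hX : X = {x | ∀ i, (∀ t, 0 ≤ x i t) ∧ (∑ t, x i t) = 1})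
    (δ : ((i : V) → S i) → ((i : V) → S i → ℝ))
    (hδ : ∀ s i t, δ s i t = if t = s i then (1 : ℝ) else 0) :
    ∃ sstar : (i : V) → S i, δ sstar ∈ X ∧
      (∀ x ∈ X, E (δ sstar) ≤ E x) ∧
      (∀ s : (i : V) → S i,
        (∑ k, f k (fun i => sstar i.1)) ≤ ∑ k, f k (fun i => s i.1)) ∧
      E (δ sstar) = ∑ k, f k (fun i => sstar i.1) :=
  stmt2_general V S K C f E hE X hX δ hδ
end

section
/- Rounding without energy increase: for every x ∈ X there exists a labeling s ∈ ∏_{i∈V} S_i such that E(δ(s)) ≤ E(x); i.e. every relaxed feasible point is dominated in energy by some discrete feasible point. -/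
/-!
The product weights `w s = ∏ i, x i (s i)` form a probability distribution on labelings. Since `E`
is multilinear and each `x i` sums to `1`, marginalising out the nodes outside each clique shows
that `E x` is the `w`-average of the energies `E (δ s)`; some labeling is no worse than the average.
-/

section ProductWeights

variable {ι R : Type*} [Fintype ι] [DecidableEq ι] {α : ι → Type*} [∀ i, Fintype (α i)]
  [CommSemiring R]

theorem Fintype.sum_prod_mul_comp_restrict (P : ι → Prop) [DecidablePred P] (x : ∀ i, α i → R)
    (hx : ∀ i, ¬P i → ∑ t, x i t = 1) (g : ((i : {i // P i}) → α i) → R) :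
    ∑ s : ∀ i, α i, (∏ i, x i (s i)) * g (fun i => s i) =
      ∑ a : (i : {i // P i}) → α i, (∏ i : {i // P i}, x i (a i)) * g a := by
  set e := Equiv.piEquivPiSubtypeProd P α
  rw [← e.symm.sum_comp, Fintype.sum_prod_type]
  refine Fintype.sum_congr _ _ fun a => ?_
  have hP : ∀ b (i : {i // P i}), e.symm (a, b) i = a i := fun b i => by simp [e, i.2]
  have hnP : ∀ b (i : {i // ¬P i}), e.symm (a, b) i = b i := fun b i => by simp [e, i.2]
  have hmarg : ∑ b : (i : {i // ¬P i}) → α i, ∏ i : {i // ¬P i}, x i (b i) = 1 := by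
    rw [← Fintype.prod_sum]
    exact Finset.prod_eq_one fun i _ => hx i i.2
  simp only [← Fintype.prod_subtype_mul_prod_subtype P, hP, hnP]
  rw [← Finset.sum_mul, ← Finset.mul_sum, hmarg, mul_one]

theorem Fintype.sum_mul_prod_ite_eq [∀ i, DecidableEq (α i)] (g : (∀ i, α i) → R)
    (s : ∀ i, α i) :
    ∑ a, g a * ∏ i, (if a i = s i then 1 else 0) = g s := by
  simp only [Finset.prod_boole, Finset.mem_univ, forall_const, ← funext_iff, mul_ite, mul_one,
    mul_zero, Fintype.sum_ite_eq']

end ProductWeights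

theorem Fintype.exists_le_sum_mul {ι R : Type*} [Fintype ι] [Nonempty ι] [Semiring R]
    [LinearOrder R] [IsOrderedRing R] (w e : ι → R) (hw₀ : ∀ i, 0 ≤ w i) (hw₁ : ∑ i, w i = 1) :
    ∃ i, e i ≤ ∑ j, w j * e j := by
  obtain ⟨i, -, hi⟩ := Finset.exists_min_image Finset.univ e Finset.univ_nonempty
  refine ⟨i, ?_⟩
  calc e i = ∑ j, w j * e i := by rw [← Finset.sum_mul, hw₁, one_mul]
    _ ≤ ∑ j, w j * e j :=
      Finset.sum_le_sum fun j _ => mul_le_mul_of_nonneg_left (hi j (Finset.mem_univ j)) (hw₀ j)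

theorem stmt3_general (V : Type) [Fintype V] [DecidableEq V]
    (S : V → Type) [∀ i, Fintype (S i)] [∀ i, DecidableEq (S i)] [∀ i, Nonempty (S i)]
    (K : Type) [Fintype K] (C : K → Finset V)
    (f : (k : K) → ((i : C k) → S i.1) → ℝ)
    (E : ((i : V) → S i → ℝ) → ℝ)
    (hE : ∀ x, E x = ∑ k, ∑ s : (i : C k) → S i.1, f k s * ∏ i : C k, x i.1 (s i))
    (X : Set ((i : V) → S i → ℝ))
    (hX : X = {x | ∀ i, (∀ t, 0 ≤ x i t) ∧ (∑ t, x i t) = 1})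
    (δ : ((i : V) → S i) → ((i : V) → S i → ℝ))
    (hδ : ∀ s i t, δ s i t = if t = s i then (1 : ℝ) else 0) :
    ∀ x ∈ X, ∃ s : (i : V) → S i, E (δ s) ≤ E x := by
  intro x hx
  rw [hX] at hx
  have hEδ (s : (i : V) → S i) : E (δ s) = ∑ k, f k (fun i => s i) := by
    simp only [hE, hδ]
    exact Finset.sum_congr rfl fun k _ => Fintype.sum_mul_prod_ite_eq (f k) _
  have hE_eq_expectation : E x = ∑ s, (∏ i, x i (s i)) * E (δ s) := by
    simp_rw [hEδ, Finset.mul_sum]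
    rw [Finset.sum_comm, hE]
    refine Finset.sum_congr rfl fun k _ => ?_
    rw [Fintype.sum_prod_mul_comp_restrict (· ∈ C k) x fun i _ => (hx i).2]
    simp only [mul_comm (f k _)]
    -- the two sides differ only in the `Fintype` instance on `C k`
    congr!
  obtain ⟨s, hs⟩ := Fintype.exists_le_sum_mul (fun s => ∏ i, x i (s i)) (fun s => E (δ s))
    (fun s => Finset.prod_nonneg fun i _ => (hx i).1 (s i))
    (by rw [← Fintype.prod_sum]; exact Finset.prod_eq_one fun i _ => (hx i).2)
  exact ⟨s, hE_eq_expectation ▸ hs⟩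

/-- Rounding without energy increase: every relaxed feasible point is dominated
in energy by the indicator vector of some labeling. -/
theorem stmt3 (V : Type) [Fintype V] [DecidableEq V] [Nonempty V]
    (S : V → Type) [∀ i, Fintype (S i)] [∀ i, DecidableEq (S i)] [∀ i, Nonempty (S i)]
    (K : Type) [Fintype K] (C : K → Finset V)
    (f : (k : K) → ((i : C k) → S i.1) → ℝ)
    (E : ((i : V) → S i → ℝ) → ℝ)
    (hE : ∀ x, E x = ∑ k, ∑ s : (i : C k) → S i.1, f k s * ∏ i : C k, x i.1 (s i))
    (X : Set ((i : V) → S i → ℝ))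
    (hX : X = {x | ∀ i, (∀ t, 0 ≤ x i t) ∧ (∑ t, x i t) = 1})
    (δ : ((i : V) → S i) → ((i : V) → S i → ℝ))
    (hδ : ∀ s i t, δ s i t = if t = s i then (1 : ℝ) else 0) :
    ∀ x ∈ X, ∃ s : (i : V) → S i, E (δ s) ≤ E x :=
  stmt3_general V S K C f E hE X hX δ hδ
end

section
/- Discrete fixed points of BCD are stationary points of the relaxation: let s ∈ ∏_{i∈V} S_i be a labeling such that no single-node relabeling decreases the energy, i.e. for every node i ∈ V and every label t ∈ S_i, E(δ(s[i ↦ t])) ≥ E(δ(s)), where s[i ↦ t] is the labeling equal to s except that node i receives label t. Then δ(s) is a stationary point of the relaxed problem min_{x∈X} E(x): ⟨∇E(δ(s)), y − δ(s)⟩ ≥ 0 for all y ∈ X. -/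
/-!
The energy is affine in each block `x i` when the other blocks are frozen. Hence its derivative
at `δ s` in the direction `y - δ s` splits into the per-node differences
`E (update (δ s) i (y i)) - E (δ s)`, and, again by affinity in block `i`, the first term is the
convex combination `∑ t, y i t * E (δ (update s i t))` of energies of single-node relabelings,
each of which is at least `E (δ s)`.
-/

open Function Finset

section Multiaffine

variable {ι : Type*} [DecidableEq ι] {M : ι → Type*} {F : Type*}

section Algebraic

variable [∀ i, AddCommGroup (M i)] [∀ i, Module ℝ (M i)] [AddCommGroup F] [Module ℝ F]

def IsMultiaffine (E : (∀ i, M i) → F) : Prop :=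
  ∀ (x : ∀ i, M i) (i : ι), ∃ (L : M i →ₗ[ℝ] F) (c : F), ∀ w, E (update x i w) = L w + c

theorem IsMultiaffine.sum {κ : Type*} (s : Finset κ) {E : κ → (∀ i, M i) → F}
    (hE : ∀ k ∈ s, IsMultiaffine (E k)) : IsMultiaffine fun x => ∑ k ∈ s, E k x := by
  intro x i
  choose! L c hLc using fun k hk => hE k hk x i
  refine ⟨∑ k ∈ s, L k, ∑ k ∈ s, c k, fun w => ?_⟩
  rw [LinearMap.sum_apply, ← sum_add_distrib]
  exact sum_congr rfl fun k hk => hLc k hk w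

theorem IsMultiaffine.const_smul {E : (∀ i, M i) → F} (hE : IsMultiaffine E) (a : ℝ) :
    IsMultiaffine fun x => a • E x := by
  intro x i
  obtain ⟨L, c, hLc⟩ := hE x i
  exact ⟨a • L, a • c, fun w => by simp only [hLc, smul_add, LinearMap.smul_apply]⟩

theorem IsMultiaffine.apply_update_eq_sum {S : ι → Type*} [∀ i, Fintype (S i)]
    [∀ i, DecidableEq (S i)] {E : (∀ i, S i → ℝ) → F} (hE : IsMultiaffine E)
    (x : ∀ i, S i → ℝ) (i : ι) {w : S i → ℝ} (hw : ∑ t, w t = 1) :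
    E (update x i w) = ∑ t, w t • E (update x i (Pi.single t 1)) := by
  obtain ⟨L, c, hLc⟩ := hE x i
  simp only [hLc, smul_add, sum_add_distrib, ← sum_smul, hw, one_smul]
  conv_lhs => rw [pi_eq_sum_univ' w]
  simp only [map_sum, map_smul]

end Algebraic

theorem isMultiaffine_prod_apply {S : ι → Type*} (C : Finset ι) (s : (j : C) → S j) :
    IsMultiaffine fun x : (∀ i, S i → ℝ) => ∏ j : C, x j (s j) := by
  intro x i
  by_cases hi : i ∈ C
  · refine ⟨(∏ j ∈ univ.erase (⟨i, hi⟩ : C), x j (s j)) • LinearMap.proj (s ⟨i, hi⟩), 0,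
      fun w => ?_⟩
    dsimp only
    rw [← mul_prod_erase univ _ (mem_univ (⟨i, hi⟩ : C)), add_zero, mul_comm]
    congr 1
    · exact prod_congr rfl fun j hj => by
        rw [update_of_ne fun h => (mem_erase.1 hj).1 (Subtype.ext h)]
    · simp
  · refine ⟨0, ∏ j : C, x j (s j), fun w => ?_⟩
    rw [LinearMap.zero_apply, zero_add]
    exact prod_congr rfl fun j _ => by rw [update_of_ne (ne_of_mem_of_not_mem j.2 hi)]

variable [Fintype ι] [∀ i, NormedAddCommGroup (M i)] [∀ i, NormedSpace ℝ (M i)]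
  [NormedAddCommGroup F] [NormedSpace ℝ F] {E : (∀ i, M i) → F}

theorem IsMultiaffine.fderiv_apply_single (hE : IsMultiaffine E) {x : ∀ i, M i}
    (hd : DifferentiableAt ℝ E x) (i : ι) (v : M i) :
    fderiv ℝ E x (Pi.single i v) = E (update x i (x i + v)) - E x := by
  obtain ⟨L, c, hLc⟩ := hE x i
  have hline : (fun τ : ℝ => E (x + τ • Pi.single i v)) = fun τ => (L (x i) + c) + τ • L v := by
    funext τ
    have hupdate : x + τ • Pi.single i v = update x i (x i + τ • v) := by
      ext j
      rcases eq_or_ne j i with rfl | hj <;> simp [*]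
    rw [hupdate, hLc, map_add, map_smul]
    abel
  have hchain : HasDerivAt (fun τ : ℝ => E (x + τ • Pi.single i v))
      (fderiv ℝ E x (Pi.single i v)) 0 :=
    hd.hasFDerivAt.comp_hasDerivAt_of_eq 0
      (by simpa using ((hasDerivAt_id (0 : ℝ)).smul_const (Pi.single i v)).const_add x)
      (by simp)
  have haffine : HasDerivAt (fun τ : ℝ => E (x + τ • Pi.single i v)) (L v) 0 := by
    rw [hline]
    simpa using ((hasDerivAt_id (0 : ℝ)).smul_const (L v)).const_add (L (x i) + c)
  rw [hchain.unique haffine, hLc, ← update_eq_self i x, hLc, update_self, map_add]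
  abel

theorem IsMultiaffine.fderiv_apply_sub (hE : IsMultiaffine E) {x : ∀ i, M i}
    (hd : DifferentiableAt ℝ E x) (y : ∀ i, M i) :
    fderiv ℝ E x (y - x) = ∑ i, (E (update x i (y i)) - E x) := by
  conv_lhs => rw [← univ_sum_single (y - x)]
  simp only [map_sum, hE.fderiv_apply_single hd, Pi.sub_apply, add_sub_cancel]

end Multiaffine

theorem stmt6_general (V : Type) [Fintype V] [DecidableEq V]
    (S : V → Type) [∀ i, Fintype (S i)] [∀ i, DecidableEq (S i)]
    (K : Type) [Fintype K] (C : K → Finset V)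
    (f : (k : K) → ((i : C k) → S i.1) → ℝ)
    (E : ((i : V) → S i → ℝ) → ℝ)
    (hE : ∀ x, E x = ∑ k, ∑ s : (i : C k) → S i.1, f k s * ∏ i : C k, x i.1 (s i))
    (X : Set ((i : V) → S i → ℝ))
    (hX : X = {x | ∀ i, (∀ t, 0 ≤ x i t) ∧ (∑ t, x i t) = 1})
    (δ : ((i : V) → S i) → ((i : V) → S i → ℝ))
    (hδ : ∀ s i t, δ s i t = if t = s i then (1 : ℝ) else 0)
    (s : (i : V) → S i)
    (hfix : ∀ (i : V) (t : S i), E (δ s) ≤ E (δ (Function.update s i t))) :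
    ∀ y ∈ X, 0 ≤ fderiv ℝ E (δ s) (y - δ s) := by
  intro y hy
  rw [hX] at hy
  have hmulti : IsMultiaffine E := by
    rw [funext hE]
    exact IsMultiaffine.sum _ fun k _ => IsMultiaffine.sum _ fun s' _ =>
      (isMultiaffine_prod_apply (C k) s').const_smul (f k s')
  have hdiff : Differentiable ℝ E := by
    rw [funext hE]
    fun_prop
  have hrelabel : ∀ i t, update (δ s) i (Pi.single t 1) = δ (update s i t) := by
    intro i t
    ext j t'
    rcases eq_or_ne j i with rfl | hj <;> simp [Pi.single_apply, *]
  rw [hmulti.fderiv_apply_sub (hdiff _)]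
  refine sum_nonneg fun i _ => sub_nonneg.2 ?_
  rw [hmulti.apply_update_eq_sum _ i (hy i).2]
  calc E (δ s) = ∑ t, y i t * E (δ s) := by rw [← sum_mul, (hy i).2, one_mul]
    _ ≤ ∑ t, y i t • E (update (δ s) i (Pi.single t 1)) :=
      sum_le_sum fun t _ => by
        rw [hrelabel, smul_eq_mul]
        exact mul_le_mul_of_nonneg_left (hfix i t) ((hy i).1 t)

/-- Discrete fixed points of BCD are stationary points of the relaxation: if no
single-node relabeling of `s` decreases the energy, then `δ(s)` satisfies the
first-order stationarity condition `⟨∇E(δ(s)), y − δ(s)⟩ ≥ 0` for all `y ∈ X`. -/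
theorem stmt6 (V : Type) [Fintype V] [DecidableEq V] [Nonempty V]
    (S : V → Type) [∀ i, Fintype (S i)] [∀ i, DecidableEq (S i)] [∀ i, Nonempty (S i)]
    (K : Type) [Fintype K] (C : K → Finset V)
    (f : (k : K) → ((i : C k) → S i.1) → ℝ)
    (E : ((i : V) → S i → ℝ) → ℝ)
    (hE : ∀ x, E x = ∑ k, ∑ s : (i : C k) → S i.1, f k s * ∏ i : C k, x i.1 (s i))
    (X : Set ((i : V) → S i → ℝ))
    (hX : X = {x | ∀ i, (∀ t, 0 ≤ x i t) ∧ (∑ t, x i t) = 1})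
    (δ : ((i : V) → S i) → ((i : V) → S i → ℝ))
    (hδ : ∀ s i t, δ s i t = if t = s i then (1 : ℝ) else 0)
    (s : (i : V) → S i)
    (hfix : ∀ (i : V) (t : S i), E (δ s) ≤ E (δ (Function.update s i t))) :
    ∀ y ∈ X, 0 ≤ fderiv ℝ E (δ s) (y - δ s) :=
  stmt6_general V S K C f E hE X hX δ hδ s hfix
end

section
/- Frank–Wolfe with exact line search converges to stationary points: let X ⊆ ℝ^n be a nonempty compact convex set and f : ℝ^n → ℝ be continuously differentiable. Let {x^(k)}, {s^(k)}, {α^(k)} be sequences with x^(0) ∈ X and, for every k: s^(k) ∈ argmin_{s∈X} ⟨∇f(x^(k)), s⟩; α^(k) ∈ argmin_{α∈[0,1]} f(x^(k) + α(s^(k) − x^(k))); and x^(k+1) = x^(k) + α^(k)(s^(k) − x^(k)). Then every limit point x* of {x^(k)} (i.e. every limit of a convergent subsequence) satisfies ⟨∇f(x*), y − x*⟩ ≥ 0 for all y ∈ X, i.e. x* is a stationary point of min_{x∈X} f(x). -/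
/-!
Exact line search makes `f (x k)` decrease, so `f xstar ≤ f (x k)` for every `k`. Along a
further subsequence `s k → sstar`, and passing to the limit in the line search gives
`f xstar ≤ f (xstar + β • (sstar - xstar))` for all `β ∈ [0, 1]`, whence
`0 ≤ ⟪∇f xstar, sstar - xstar⟫`. Passing to the limit in the linear minimisation gives
`⟪∇f xstar, sstar⟫ ≤ ⟪∇f xstar, y⟫` for `y ∈ X`.
-/

open Filter Set Topology

theorem Antitone.le_of_tendsto_comp {α : Type*} [TopologicalSpace α] [Preorder α]
    [OrderClosedTopology α] {u : ℕ → α} {φ : ℕ → ℕ} {a : α} (hu : Antitone u)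
    (hφ : StrictMono φ) (ha : Tendsto (u ∘ φ) atTop (𝓝 a)) (j : ℕ) : a ≤ u j :=
  ((hu.comp_monotone hφ.monotone).le_of_tendsto ha j).trans (hu (hφ.id_le j))

theorem fderiv_apply_nonneg_of_forall_le_add_smul {E : Type*} [NormedAddCommGroup E]
    [NormedSpace ℝ E] {f : E → ℝ} {a v : E} (hf : DifferentiableAt ℝ f a)
    (hmin : ∀ t ∈ Icc (0 : ℝ) 1, f a ≤ f (a + t • v)) : 0 ≤ fderiv ℝ f a v := by
  have hseg : IsMinOn f (segment ℝ a (a + v)) a := by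
    rw [segment_eq_image', add_sub_cancel_left]
    rintro _ ⟨t, ht, rfl⟩
    exact hmin t ht
  exact hseg.localize.hasFDerivWithinAt_nonneg hf.hasFDerivAt.hasFDerivWithinAt
    (mem_posTangentConeAt_of_segment_subset subset_rfl)

theorem stmt7_general (n : ℕ)
    (X : Set (EuclideanSpace ℝ (Fin n)))
    (hXcompact : IsCompact X)
    (f : EuclideanSpace ℝ (Fin n) → ℝ) (hf : ContDiff ℝ 1 f)
    (x s : ℕ → EuclideanSpace ℝ (Fin n)) (α : ℕ → ℝ)
    (hs : ∀ k, s k ∈ X ∧ ∀ z ∈ X,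
      (inner ℝ (gradient f (x k)) (s k) : ℝ) ≤ inner ℝ (gradient f (x k)) z)
    (hα : ∀ k, α k ∈ Set.Icc (0 : ℝ) 1 ∧ ∀ β ∈ Set.Icc (0 : ℝ) 1,
      f (x k + α k • (s k - x k)) ≤ f (x k + β • (s k - x k)))
    (hupd : ∀ k, x (k + 1) = x k + α k • (s k - x k))
    (xstar : EuclideanSpace ℝ (Fin n)) (φ : ℕ → ℕ) (hφ : StrictMono φ)
    (hlim : Filter.Tendsto (fun k => x (φ k)) Filter.atTop (nhds xstar)) :
    ∀ y ∈ X, 0 ≤ (inner ℝ (gradient f xstar) (y - xstar) : ℝ) := by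
  intro y hy
  have hfc : Continuous f := hf.continuous
  have hgrad : Continuous (gradient f) :=
    (InnerProductSpace.toDual ℝ _).symm.continuous.comp (hf.continuous_fderiv one_ne_zero)
  have hdesc : Antitone fun k => f (x k) := antitone_nat_of_succ_le fun k => by
    simpa [hupd] using (hα k).2 0 ⟨le_rfl, zero_le_one⟩
  have hlow : ∀ j, f xstar ≤ f (x j) :=
    hdesc.le_of_tendsto_comp hφ ((hfc.tendsto xstar).comp hlim)
  obtain ⟨sstar, -, ψ, hψ, hsψ⟩ := hXcompact.tendsto_subseq fun k => (hs (φ k)).1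
  have hxψ : Tendsto (fun k => x (φ (ψ k))) atTop (𝓝 xstar) := hlim.comp hψ.tendsto_atTop
  have hsearch : ∀ β ∈ Icc (0 : ℝ) 1, f xstar ≤ f (xstar + β • (sstar - xstar)) := by
    intro β hβ
    refine ge_of_tendsto ((hfc.tendsto _).comp (hxψ.add ((hsψ.sub hxψ).const_smul β)))
      (Eventually.of_forall fun k => ?_)
    calc f xstar ≤ f (x (φ (ψ k) + 1)) := hlow _
      _ ≤ _ := by rw [hupd]; exact (hα _).2 β hβ
  have hstat : 0 ≤ inner ℝ (gradient f xstar) (sstar - xstar) := by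
    rw [inner_gradient_left]
    exact fderiv_apply_nonneg_of_forall_le_add_smul
      ((hf.differentiable one_ne_zero) xstar) hsearch
  have hlin : inner ℝ (gradient f xstar) sstar ≤ inner ℝ (gradient f xstar) y :=
    le_of_tendsto_of_tendsto' (((hgrad.tendsto xstar).comp hxψ).inner hsψ)
      (((hgrad.tendsto xstar).comp hxψ).inner tendsto_const_nhds)
      fun k => (hs (φ (ψ k))).2 y hy
  rw [inner_sub_right] at hstat ⊢
  linarith

/-- Frank–Wolfe with exact line search converges to stationary points: every
limit point of the iterates satisfies the first-order variational inequality. -/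
theorem stmt7 (n : ℕ)
    (X : Set (EuclideanSpace ℝ (Fin n)))
    (hXne : X.Nonempty) (hXcompact : IsCompact X) (hXconvex : Convex ℝ X)
    (f : EuclideanSpace ℝ (Fin n) → ℝ) (hf : ContDiff ℝ 1 f)
    (x s : ℕ → EuclideanSpace ℝ (Fin n)) (α : ℕ → ℝ)
    (hx0 : x 0 ∈ X)
    (hs : ∀ k, s k ∈ X ∧ ∀ z ∈ X,
      (inner ℝ (gradient f (x k)) (s k) : ℝ) ≤ inner ℝ (gradient f (x k)) z)
    (hα : ∀ k, α k ∈ Set.Icc (0 : ℝ) 1 ∧ ∀ β ∈ Set.Icc (0 : ℝ) 1,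
      f (x k + α k • (s k - x k)) ≤ f (x k + β • (s k - x k)))
    (hupd : ∀ k, x (k + 1) = x k + α k • (s k - x k))
    (xstar : EuclideanSpace ℝ (Fin n)) (φ : ℕ → ℕ) (hφ : StrictMono φ)
    (hlim : Filter.Tendsto (fun k => x (φ k)) Filter.atTop (nhds xstar)) :
    ∀ y ∈ X, 0 ≤ (inner ℝ (gradient f xstar) (y - xstar) : ℝ) :=
  stmt7_general n X hXcompact f hf x s α hs hα hupd xstar φ hφ hlim
end

section
/- Projected gradient descent with exact line search converges to stationary points: let X ⊆ ℝ^n be a nonempty closed convex set and f : ℝ^n → ℝ be continuously differentiable. Let {x^(k)}, {s^(k)}, {α^(k)} be sequences with x^(0) ∈ X and, for every k: s^(k) is the (unique) point of X minimizing ‖x^(k) − ∇f(x^(k)) − z‖ over z ∈ X (the metric projection of x^(k) − ∇f(x^(k)) onto X); α^(k) ∈ argmin_{α∈[0,1]} f(x^(k) + α(s^(k) − x^(k))); and x^(k+1) = x^(k) + α^(k)(s^(k) − x^(k)). Then every limit point x* of {x^(k)} satisfies ⟨∇f(x*), y − x*⟩ ≥ 0 for all y ∈ X, i.e. x* is a stationary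 point of min_{x∈X} f(x). -/
/-!
Let `(x ∘ χ, s ∘ χ) → (x*, s*)` along a subsequence; such a subsequence exists since
`‖s k - x k‖ ≤ 2 ‖∇f (x k)‖` is bounded along convergent subsequences. The values `f (x k)`
decrease, so `f x* ≤ f (x (k + 1)) ≤ f (x k + β (s k - x k))` for every `k` and `β ∈ [0, 1]`;
passing to the limit, `x*` minimizes `f` on the segment `[x*, s*]`, whence
`⟪∇f x*, s* - x*⟫ ≥ 0`. In the limit `s*` is the projection of `x* - ∇f x*` onto `X`, and the
variational inequality of the projection tested at `x*` gives `‖x* - s*‖² ≤ -⟪∇f x*, s* - x*⟫`,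
so `s* = x*`; the same inequality then reads `⟪∇f x*, y - x*⟫ ≥ 0` for all `y ∈ X`.
-/

open RealInnerProductSpace Filter Topology Set

section VariationalInequality

variable {E : Type*} [NormedAddCommGroup E] [InnerProductSpace ℝ E] {X : Set E}

lemma real_inner_le_zero_of_forall_norm_sub_le (hX : Convex ℝ X) {u p : E} (hp : p ∈ X)
    (hmin : ∀ z ∈ X, ‖u - p‖ ≤ ‖u - z‖) : ∀ w ∈ X, ⟪u - p, w - p⟫ ≤ 0 := by
  have : Nonempty X := ⟨⟨p, hp⟩⟩
  refine (norm_eq_iInf_iff_real_inner_le_zero hX hp).1 <|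
    le_antisymm (le_ciInf fun w => hmin w w.2) ?_
  exact ciInf_le ⟨0, forall_mem_range.2 fun w : X => norm_nonneg (u - w)⟩ ⟨p, hp⟩

lemma forall_real_inner_sub_nonneg_of_real_inner_proj_sub_nonneg (hX : Convex ℝ X)
    {x p G : E} (hx : x ∈ X) (hp : p ∈ X) (hmin : ∀ z ∈ X, ‖x - G - p‖ ≤ ‖x - G - z‖)
    (hG : 0 ≤ ⟪G, p - x⟫) : ∀ w ∈ X, 0 ≤ ⟪G, w - x⟫ := by
  have hvi := real_inner_le_zero_of_forall_norm_sub_le hX hp hmin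
  have hpx : p = x := by
    have hexpand : ⟪x - G - p, x - p⟫ = ‖x - p‖ ^ 2 + ⟪G, p - x⟫ := by
      rw [show x - G - p = (x - p) - G by abel, inner_sub_left, real_inner_self_eq_norm_sq,
        ← neg_sub p x, inner_neg_right, sub_neg_eq_add]
    have hsq : ‖x - p‖ ^ 2 ≤ 0 := by linarith [hvi x hx]
    simpa [sub_eq_zero, eq_comm] using hsq.antisymm (sq_nonneg _)
  subst hpx
  intro w hw
  simpa [inner_neg_left] using hvi w hw

end VariationalInequality

section FirstOrder

variable {E : Type*} [NormedAddCommGroup E] [InnerProductSpace ℝ E] [CompleteSpace E]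

lemma real_inner_gradient_sub_nonneg_of_isMinOn_segment {f : E → ℝ} {a b : E}
    (hf : DifferentiableAt ℝ f a) (hmin : IsMinOn f (segment ℝ a b) a) :
    0 ≤ ⟪gradient f a, b - a⟫ := by
  have h := hmin.localize.hasFDerivWithinAt_nonneg hf.hasFDerivAt.hasFDerivWithinAt
    (sub_mem_posTangentConeAt_of_segment_subset subset_rfl)
  rwa [← toDual_gradient, InnerProductSpace.toDual_apply_apply] at h

lemma ContDiff.continuous_gradient {f : E → ℝ} (hf : ContDiff ℝ 1 f) :
    Continuous (gradient f) :=
  (InnerProductSpace.toDual ℝ E).symm.continuous.comp (hf.continuous_fderiv one_ne_zero)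

end FirstOrder

namespace ProjectedGradient

variable {E : Type*} [NormedAddCommGroup E] [InnerProductSpace ℝ E]
  {X : Set E} {f : E → ℝ} {x s : ℕ → E} {α : ℕ → ℝ}

lemma iterate_mem (hX : Convex ℝ X) (hx0 : x 0 ∈ X) (hs : ∀ k, s k ∈ X)
    (hα : ∀ k, α k ∈ Icc (0 : ℝ) 1) (hupd : ∀ k, x (k + 1) = x k + α k • (s k - x k)) :
    ∀ k, x k ∈ X
  | 0 => hx0
  | k + 1 => hupd k ▸ hX.add_smul_sub_mem (iterate_mem hX hx0 hs hα hupd k) (hs k) (hα k)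

lemma antitone_objective
    (hα : ∀ k, ∀ β ∈ Icc (0 : ℝ) 1, f (x k + α k • (s k - x k)) ≤ f (x k + β • (s k - x k)))
    (hupd : ∀ k, x (k + 1) = x k + α k • (s k - x k)) : Antitone (f ∘ x) :=
  antitone_nat_of_succ_le fun k => by
    simpa [hupd k] using hα k 0 (left_mem_Icc.2 zero_le_one)

variable [CompleteSpace E]

lemma norm_sub_le_two_mul {k : ℕ} (hx : x k ∈ X)
    (hs : ∀ z ∈ X, ‖x k - gradient f (x k) - s k‖ ≤ ‖x k - gradient f (x k) - z‖) :
    ‖s k - x k‖ ≤ 2 * ‖gradient f (x k)‖ := by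
  calc ‖s k - x k‖ ≤ ‖x k - gradient f (x k) - s k‖ + ‖x k - gradient f (x k) - x k‖ := by
        rw [← norm_neg (x k - gradient f (x k) - s k)]
        exact (norm_add_le _ _).trans_eq' (by congr 1; abel)
    _ ≤ 2 * ‖gradient f (x k)‖ := by
        have h := hs (x k) hx
        simp only [sub_sub_cancel_left, norm_neg] at h ⊢
        linarith

lemma isBounded_range_comp (hf : ContDiff ℝ 1 f) (hxX : ∀ k, x k ∈ X)
    (hs : ∀ k, s k ∈ X ∧ ∀ z ∈ X,
      ‖x k - gradient f (x k) - s k‖ ≤ ‖x k - gradient f (x k) - z‖)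
    {φ : ℕ → ℕ} {xstar : E} (hxφ : Tendsto (x ∘ φ) atTop (𝓝 xstar)) :
    Bornology.IsBounded (range (s ∘ φ)) := by
  obtain ⟨A, hA⟩ := isBounded_iff_forall_norm_le.1 (Metric.isBounded_range_of_tendsto _ hxφ)
  obtain ⟨B, hB⟩ := isBounded_iff_forall_norm_le.1 (Metric.isBounded_range_of_tendsto _
    ((hf.continuous_gradient.tendsto xstar).comp hxφ))
  refine isBounded_iff_forall_norm_le.2 ⟨A + 2 * B, forall_mem_range.2 fun k => ?_⟩
  have hxk : ‖x (φ k)‖ ≤ A := hA _ (mem_range_self k)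
  have hgk : ‖gradient f (x (φ k))‖ ≤ B := hB _ (mem_range_self k)
  have hsx := norm_sub_le_two_mul (hxX (φ k)) (hs (φ k)).2
  calc ‖s (φ k)‖ ≤ ‖x (φ k)‖ + ‖s (φ k) - x (φ k)‖ := norm_le_insert' _ _
    _ ≤ A + 2 * B := by linarith

lemma stationary_of_tendsto (hXclosed : IsClosed X) (hXconvex : Convex ℝ X)
    (hf : ContDiff ℝ 1 f) (hxX : ∀ k, x k ∈ X)
    (hs : ∀ k, s k ∈ X ∧ ∀ z ∈ X,
      ‖x k - gradient f (x k) - s k‖ ≤ ‖x k - gradient f (x k) - z‖)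
    (hα : ∀ k, ∀ β ∈ Icc (0 : ℝ) 1, f (x k + α k • (s k - x k)) ≤ f (x k + β • (s k - x k)))
    (hupd : ∀ k, x (k + 1) = x k + α k • (s k - x k)) {χ : ℕ → ℕ} (hχ : StrictMono χ)
    {xstar sstar : E} (hxχ : Tendsto (x ∘ χ) atTop (𝓝 xstar))
    (hsχ : Tendsto (s ∘ χ) atTop (𝓝 sstar)) :
    ∀ y ∈ X, 0 ≤ ⟪gradient f xstar, y - xstar⟫ := by
  have hxstar : xstar ∈ X := hXclosed.mem_of_tendsto hxχ (.of_forall fun k => hxX (χ k))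
  have hsstar : sstar ∈ X := hXclosed.mem_of_tendsto hsχ (.of_forall fun k => (hs (χ k)).1)
  have hu : Tendsto (fun k => x (χ k) - gradient f (x (χ k))) atTop
      (𝓝 (xstar - gradient f xstar)) := hxχ.sub ((hf.continuous_gradient.tendsto xstar).comp hxχ)
  have hproj : ∀ z ∈ X, ‖xstar - gradient f xstar - sstar‖ ≤ ‖xstar - gradient f xstar - z‖ :=
    fun z hz => le_of_tendsto_of_tendsto' (hu.sub hsχ).norm (hu.sub_const z).norm
      fun k => (hs (χ k)).2 z hz
  have hanti := antitone_objective hα hupd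
  have hlower : ∀ j, f xstar ≤ f (x j) := fun j =>
    ((hanti.comp_monotone hχ.monotone).le_of_tendsto ((hf.continuous.tendsto xstar).comp hxχ) j)
      |>.trans (hanti (hχ.id_le j))
  have hmin : IsMinOn f (segment ℝ xstar sstar) xstar := by
    rw [segment_eq_image']
    rintro _ ⟨β, hβ, rfl⟩
    refine ge_of_tendsto' (((hf.continuous.tendsto _).comp
      (hxχ.add ((hsχ.sub hxχ).const_smul β)))) fun k => ?_
    exact (hlower (χ k + 1)).trans (hupd (χ k) ▸ hα (χ k) β hβ)
  exact forall_real_inner_sub_nonneg_of_real_inner_proj_sub_nonneg hXconvex hxstar hsstar hproj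
    (real_inner_gradient_sub_nonneg_of_isMinOn_segment (hf.differentiable one_ne_zero _) hmin)

end ProjectedGradient

theorem stmt8_general (n : ℕ)
    (X : Set (EuclideanSpace ℝ (Fin n)))
    (hXclosed : IsClosed X) (hXconvex : Convex ℝ X)
    (f : EuclideanSpace ℝ (Fin n) → ℝ) (hf : ContDiff ℝ 1 f)
    (x s : ℕ → EuclideanSpace ℝ (Fin n)) (α : ℕ → ℝ)
    (hx0 : x 0 ∈ X)
    (hs : ∀ k, s k ∈ X ∧ ∀ z ∈ X,
      ‖x k - gradient f (x k) - s k‖ ≤ ‖x k - gradient f (x k) - z‖)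
    (hα : ∀ k, α k ∈ Set.Icc (0 : ℝ) 1 ∧ ∀ β ∈ Set.Icc (0 : ℝ) 1,
      f (x k + α k • (s k - x k)) ≤ f (x k + β • (s k - x k)))
    (hupd : ∀ k, x (k + 1) = x k + α k • (s k - x k))
    (xstar : EuclideanSpace ℝ (Fin n)) (φ : ℕ → ℕ) (hφ : StrictMono φ)
    (hlim : Filter.Tendsto (fun k => x (φ k)) Filter.atTop (nhds xstar)) :
    ∀ y ∈ X, 0 ≤ (inner ℝ (gradient f xstar) (y - xstar) : ℝ) := by
  have hxX := ProjectedGradient.iterate_mem hXconvex hx0 (fun k => (hs k).1)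
    (fun k => (hα k).1) hupd
  obtain ⟨sstar, -, ψ, hψ, hsψ⟩ := tendsto_subseq_of_bounded
    (ProjectedGradient.isBounded_range_comp hf hxX hs hlim) fun k => mem_range_self k
  exact ProjectedGradient.stationary_of_tendsto hXclosed hXconvex hf hxX hs (fun k => (hα k).2)
    hupd (hφ.comp hψ) (hlim.comp hψ.tendsto_atTop) hsψ

/-- Projected gradient descent with exact line search converges to stationary
points: every limit point of the iterates satisfies the first-order variational
inequality. -/
theorem stmt8 (n : ℕ)
    (X : Set (EuclideanSpace ℝ (Fin n)))
    (hXne : X.Nonempty) (hXclosed : IsClosed X) (hXconvex : Convex ℝ X)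
    (f : EuclideanSpace ℝ (Fin n) → ℝ) (hf : ContDiff ℝ 1 f)
    (x s : ℕ → EuclideanSpace ℝ (Fin n)) (α : ℕ → ℝ)
    (hx0 : x 0 ∈ X)
    (hs : ∀ k, s k ∈ X ∧ ∀ z ∈ X,
      ‖x k - gradient f (x k) - s k‖ ≤ ‖x k - gradient f (x k) - z‖)
    (hα : ∀ k, α k ∈ Set.Icc (0 : ℝ) 1 ∧ ∀ β ∈ Set.Icc (0 : ℝ) 1,
      f (x k + α k • (s k - x k)) ≤ f (x k + β • (s k - x k)))
    (hupd : ∀ k, x (k + 1) = x k + α k • (s k - x k))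
    (xstar : EuclideanSpace ℝ (Fin n)) (φ : ℕ → ℕ) (hφ : StrictMono φ)
    (hlim : Filter.Tendsto (fun k => x (φ k)) Filter.atTop (nhds xstar)) :
    ∀ y ∈ X, 0 ≤ (inner ℝ (gradient f xstar) (y - xstar) : ℝ) :=
  stmt8_general n X hXclosed hXconvex f hf x s α hx0 hs hα hupd xstar φ hφ hlim
end

section
/- Limit points of ADMM are KKT points: fix D ≥ 1, a consensus decomposition A_1,…,A_D : ℝ^N → ℝ^M, nonempty closed convex sets X_1,…,X_D ⊆ ℝ^N, a penalty ρ > 0, and F : (ℝ^N)^D → ℝ continuously differentiable and convex in each block (for every d and fixed other blocks, x_d ↦ F is convex). Let {(x_1^(k),…,x_D^(k), y^(k))} be sequences with x_d^(k) ∈ X_d for all d, k, satisfying the ADMM updates: for every k and every d = 1,…,D, x_d^(k+1) ∈ argmin_{x∈X_d} L_ρ(x_1^(k+1),…,x_{d−1}^(k+1), x, x_{d+1}^(k),…,x_D^(k), y^(k)), and y^(k+1) = y^(k) + ρ·Σ_{d=1}^D A_d x_d^(k+1). Assume the residual r^(k) = ‖Σ_{d=1}^D A_d x_d^(k)‖²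 + Σ_{d=1}^D ‖x_d^(k) − x_d^(k−1)‖² converges to 0 as k → ∞. Then every limit point (x*_1,…,x*_D, y*) of the joint sequence is a KKT point of min{ F(x_1,…,x_D) : Σ_d A_d x_d = 0, x_d ∈ X_d for all d }; in particular x*_1 = ⋯ = x*_D. -/
open Filter Topology Function

/-!
Along the subsequence the residual forces `x (φ j + 1) - x (φ j) → 0` and
`∑ d, A d (x (φ j + 1) d) → 0`, so every argument of the block-update inequalities converges:
in the limit `x* d` minimizes the block augmented Lagrangian `L (update x* d ·) y*` over `X d`,
and `∑ d, A d (x* d) = 0`. Because the constraint holds at `x*`, the penalty term becomes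
`ρ / 2 * ‖A d (w - x* d)‖ ^ 2`, which is quadratic in the displacement. For a convex objective
such a term cannot change the minimizer: testing at `(1 - t) • x₀ + t • z` and dividing by `t`
gives `f x₀ ≤ f z + O(t)`, and `t → 0⁺`.
-/

theorem tendsto_zero_of_norm_sq_le {α E : Type*} [SeminormedAddCommGroup E] {l : Filter α}
    {v : α → E} {r : α → ℝ} (hr : Tendsto r l (𝓝 0)) (hv : ∀ k, ‖v k‖ ^ 2 ≤ r k) :
    Tendsto v l (𝓝 0) := by
  rw [tendsto_zero_iff_norm_tendsto_zero]
  refine squeeze_zero (fun k => norm_nonneg _) (fun k => ?_) (by simpa using hr.sqrt)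
  simpa using Real.abs_le_sqrt (hv k)

theorem ConvexOn.isMinOn_of_le_add_homogeneous {E : Type*} [AddCommGroup E] [Module ℝ E]
    {s : Set E} {f Q : E → ℝ} (hf : ConvexOn ℝ s f) (hQ : ∀ (t : ℝ) v, Q (t • v) = t ^ 2 * Q v)
    {x : E} (hx : x ∈ s) (hmin : ∀ w ∈ s, f x ≤ f w + Q (w - x)) : IsMinOn f s x := by
  refine isMinOn_iff.2 fun z hz => ?_
  have hseg : ∀ t ∈ Set.Ioo (0 : ℝ) 1, f x ≤ f z + t * Q (z - x) := by
    rintro t ⟨ht0, ht1⟩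
    have hconv := hf.2 hx hz (sub_nonneg.2 ht1.le) ht0.le (sub_add_cancel 1 t)
    have hw := hmin _ (hf.1 hx hz (sub_nonneg.2 ht1.le) ht0.le (sub_add_cancel 1 t))
    have hdisp : (1 - t) • x + t • z - x = t • (z - x) := by
      rw [smul_sub, sub_smul, one_smul]; abel
    rw [hdisp, hQ] at hw
    rw [smul_eq_mul, smul_eq_mul] at hconv
    exact le_of_mul_le_mul_left (by linarith : t * f x ≤ t * (f z + t * Q (z - x))) ht0
  have hlim : Tendsto (fun t : ℝ => f z + t * Q (z - x)) (𝓝[>] 0) (𝓝 (f z)) := by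
    have : Tendsto (fun t : ℝ => f z + t * Q (z - x)) (𝓝 0) (𝓝 (f z + 0 * Q (z - x))) :=
      (continuous_const.add (continuous_id.mul continuous_const)).tendsto 0
    simpa using this.mono_left nhdsWithin_le_nhds
  exact ge_of_tendsto hlim (mem_of_superset (Ioo_mem_nhdsGT one_pos) hseg)

theorem isMinOn_add_inner_of_le_augmented {E G : Type*} [AddCommGroup E] [Module ℝ E]
    [NormedAddCommGroup G] [InnerProductSpace ℝ G] {s : Set E} {f : E → ℝ} (hs : Convex ℝ s)
    (hf : ConvexOn ℝ s f) (A : E →ₗ[ℝ] G) (y : G) (ρ : ℝ) {x : E} (hx : x ∈ s)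
    (hmin : ∀ w ∈ s, f x ≤ f w + inner ℝ y (A (w - x)) + ρ / 2 * ‖A (w - x)‖ ^ 2) :
    IsMinOn (fun w => f w + inner ℝ y (A w)) s x := by
  refine (hf.add (((innerₛₗ ℝ y).comp A).convexOn hs)).isMinOn_of_le_add_homogeneous
    (Q := fun v => ρ / 2 * ‖A v‖ ^ 2) (fun t v => ?_) hx fun w hw => ?_
  · simp only [map_smul, norm_smul, Real.norm_eq_abs, mul_pow, sq_abs]; ring
  · have := hmin w hw
    simp only [Pi.add_apply, LinearMap.comp_apply, innerₛₗ_apply_apply, map_sub,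
      inner_sub_right] at this ⊢
    linarith

theorem sum_linearMap_apply_update {ι R E G : Type*} [Fintype ι] [DecidableEq ι] [Semiring R]
    [AddCommGroup E] [Module R E] [AddCommGroup G] [Module R G] (A : ι → E →ₗ[R] G)
    (x : ι → E) (d : ι) (w : E) :
    ∑ i, A i (update x d w i) = ∑ i, A i (x i) + A d (w - x d) := by
  rw [← sub_eq_iff_eq_add', ← Finset.sum_sub_distrib, Finset.sum_eq_single d]
  · simp
  · intro i _ hi; simp [update_of_ne hi]
  · simp

theorem tendsto_gaussSeidel_update {α ι E : Type*} [LinearOrder ι] [TopologicalSpace E]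
    {l : Filter α} {a b : α → ι → E} {z : α → E} {u : ι → E} {v : E} (d : ι)
    (ha : Tendsto a l (𝓝 u)) (hb : Tendsto b l (𝓝 u)) (hz : Tendsto z l (𝓝 v)) :
    Tendsto (fun j d' => if d' < d then a j d' else if d' = d then z j else b j d') l
      (𝓝 (update u d v)) := by
  refine tendsto_pi_nhds.2 fun d' => ?_
  rcases lt_trichotomy d' d with h | rfl | h
  · simpa [h, h.ne] using tendsto_pi_nhds.1 ha d'
  · simpa using hz
  · simpa [h.not_gt, h.ne'] using tendsto_pi_nhds.1 hb d'

theorem stmt10_general (D N M : ℕ)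
    (A : Fin D → (EuclideanSpace ℝ (Fin N) →ₗ[ℝ] EuclideanSpace ℝ (Fin M)))
    (hA : ∀ x : Fin D → EuclideanSpace ℝ (Fin N),
      (∑ d, A d (x d)) = 0 ↔ ∀ d d', x d = x d')
    (X : Fin D → Set (EuclideanSpace ℝ (Fin N)))
    (hXclosed : ∀ d, IsClosed (X d))
    (hXconvex : ∀ d, Convex ℝ (X d))
    (ρ : ℝ)
    (F : (Fin D → EuclideanSpace ℝ (Fin N)) → ℝ) (hF : ContDiff ℝ 1 F)
    (hFconv : ∀ (d : Fin D) (z : Fin D → EuclideanSpace ℝ (Fin N)),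
      ConvexOn ℝ Set.univ (fun w => F (Function.update z d w)))
    (L : (Fin D → EuclideanSpace ℝ (Fin N)) → EuclideanSpace ℝ (Fin M) → ℝ)
    (hL : ∀ x y, L x y = F x + (inner ℝ y (∑ d, A d (x d)) : ℝ)
      + ρ / 2 * ‖∑ d, A d (x d)‖ ^ 2)
    (x : ℕ → Fin D → EuclideanSpace ℝ (Fin N)) (y : ℕ → EuclideanSpace ℝ (Fin M))
    (hxmem : ∀ k d, x k d ∈ X d)
    (hxupd : ∀ (k : ℕ) (d : Fin D), ∀ z ∈ X d,
      L (fun d' => if d' < d then x (k + 1) d' else if d' = d then x (k + 1) d else x k d') (y k)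
        ≤ L (fun d' => if d' < d then x (k + 1) d' else if d' = d then z else x k d') (y k))
    (hres : Filter.Tendsto
      (fun k => ‖∑ d, A d (x (k + 1) d)‖ ^ 2 + ∑ d, ‖x (k + 1) d - x k d‖ ^ 2)
      Filter.atTop (nhds 0))
    (xstar : Fin D → EuclideanSpace ℝ (Fin N)) (ystar : EuclideanSpace ℝ (Fin M))
    (φ : ℕ → ℕ) (hφ : StrictMono φ)
    (hlim : Filter.Tendsto (fun k => (x (φ k), y (φ k))) Filter.atTop (nhds (xstar, ystar))) :
    (∀ d, xstar d ∈ X d) ∧ (∑ d, A d (xstar d)) = 0 ∧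
      (∀ d, ∀ z ∈ X d,
        F xstar + (inner ℝ ystar (A d (xstar d)) : ℝ)
          ≤ F (Function.update xstar d z) + (inner ℝ ystar (A d z) : ℝ)) ∧
      (∀ d d', xstar d = xstar d') := by
  have hAc : ∀ d, Continuous (A d) := fun d => (A d).continuous_of_finiteDimensional
  have hLc : Continuous fun p : (Fin D → EuclideanSpace ℝ (Fin N)) × EuclideanSpace ℝ (Fin M) =>
      L p.1 p.2 := by
    simp_rw [hL]; fun_prop
  have hx : Tendsto (fun j => x (φ j)) atTop (𝓝 xstar) := hlim.fst_nhds
  have hy : Tendsto (fun j => y (φ j)) atTop (𝓝 ystar) := hlim.snd_nhds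
  have hcons : Tendsto (fun k => ∑ d, A d (x (k + 1) d)) atTop (𝓝 0) :=
    tendsto_zero_of_norm_sq_le hres fun k =>
      le_add_of_nonneg_right (Finset.sum_nonneg fun d _ => sq_nonneg _)
  have hstep : Tendsto (fun k => x (k + 1) - x k) atTop (𝓝 0) :=
    tendsto_pi_nhds.2 fun d => tendsto_zero_of_norm_sq_le hres fun k =>
      (Finset.single_le_sum (f := fun d => ‖x (k + 1) d - x k d‖ ^ 2)
        (fun d _ => sq_nonneg _) (Finset.mem_univ d)).trans (le_add_of_nonneg_left (sq_nonneg _))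
  have hx' : Tendsto (fun j => x (φ j + 1)) atTop (𝓝 xstar) := by
    simpa using (hstep.comp hφ.tendsto_atTop).add hx
  have hSc : Continuous fun v : Fin D → EuclideanSpace ℝ (Fin N) => ∑ d, A d (v d) := by fun_prop
  have hsum : ∑ d, A d (xstar d) = 0 :=
    tendsto_nhds_unique ((hSc.tendsto xstar).comp hx') (hcons.comp hφ.tendsto_atTop)
  have hmem : ∀ d, xstar d ∈ X d := fun d => (hXclosed d).mem_of_tendsto
    ((continuous_apply d).tendsto _ |>.comp hx) (Eventually.of_forall fun j => hxmem (φ j) d)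
  have hkey : ∀ d, ∀ w ∈ X d, L xstar ystar ≤ L (update xstar d w) ystar := by
    intro d w hw
    have hcur := tendsto_gaussSeidel_update d hx' hx ((continuous_apply d).tendsto _ |>.comp hx')
    rw [update_eq_self] at hcur
    exact le_of_tendsto_of_tendsto' ((hLc.tendsto _).comp (hcur.prodMk_nhds hy))
      ((hLc.tendsto _).comp
        ((tendsto_gaussSeidel_update d hx' hx tendsto_const_nhds).prodMk_nhds hy))
      fun j => hxupd (φ j) d w hw
  have hkkt : ∀ d, ∀ z ∈ X d, F xstar + inner ℝ ystar (A d (xstar d))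
      ≤ F (update xstar d z) + inner ℝ ystar (A d z) := by
    intro d
    have hmin := isMinOn_add_inner_of_le_augmented (hXconvex d)
      ((hFconv d xstar).subset (Set.subset_univ _) (hXconvex d)) (A d) ystar ρ (hmem d)
      fun w hw => by simpa [hL, sum_linearMap_apply_update, hsum] using hkey d w hw
    simpa [isMinOn_iff] using hmin
  exact ⟨hmem, hsum, hkkt, (hA xstar).1 hsum⟩

/-- Limit points of ADMM are KKT points: under a consensus decomposition and
vanishing residual, every limit point of the joint ADMM sequence is a KKT point
of the decomposed problem; in particular all its blocks agree. -/
theorem stmt10 (D N M : ℕ) (hD : 1 ≤ D)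
    (A : Fin D → (EuclideanSpace ℝ (Fin N) →ₗ[ℝ] EuclideanSpace ℝ (Fin M)))
    (hA : ∀ x : Fin D → EuclideanSpace ℝ (Fin N),
      (∑ d, A d (x d)) = 0 ↔ ∀ d d', x d = x d')
    (X : Fin D → Set (EuclideanSpace ℝ (Fin N)))
    (hXne : ∀ d, (X d).Nonempty) (hXclosed : ∀ d, IsClosed (X d))
    (hXconvex : ∀ d, Convex ℝ (X d))
    (ρ : ℝ) (hρ : 0 < ρ)
    (F : (Fin D → EuclideanSpace ℝ (Fin N)) → ℝ) (hF : ContDiff ℝ 1 F)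
    (hFconv : ∀ (d : Fin D) (z : Fin D → EuclideanSpace ℝ (Fin N)),
      ConvexOn ℝ Set.univ (fun w => F (Function.update z d w)))
    (L : (Fin D → EuclideanSpace ℝ (Fin N)) → EuclideanSpace ℝ (Fin M) → ℝ)
    (hL : ∀ x y, L x y = F x + (inner ℝ y (∑ d, A d (x d)) : ℝ)
      + ρ / 2 * ‖∑ d, A d (x d)‖ ^ 2)
    (x : ℕ → Fin D → EuclideanSpace ℝ (Fin N)) (y : ℕ → EuclideanSpace ℝ (Fin M))
    (hxmem : ∀ k d, x k d ∈ X d)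
    (hxupd : ∀ (k : ℕ) (d : Fin D), ∀ z ∈ X d,
      L (fun d' => if d' < d then x (k + 1) d' else if d' = d then x (k + 1) d else x k d') (y k)
        ≤ L (fun d' => if d' < d then x (k + 1) d' else if d' = d then z else x k d') (y k))
    (hyupd : ∀ k, y (k + 1) = y k + ρ • ∑ d, A d (x (k + 1) d))
    (hres : Filter.Tendsto
      (fun k => ‖∑ d, A d (x (k + 1) d)‖ ^ 2 + ∑ d, ‖x (k + 1) d - x k d‖ ^ 2)
      Filter.atTop (nhds 0))
    (xstar : Fin D → EuclideanSpace ℝ (Fin N)) (ystar : EuclideanSpace ℝ (Fin M))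
    (φ : ℕ → ℕ) (hφ : StrictMono φ)
    (hlim : Filter.Tendsto (fun k => (x (φ k), y (φ k))) Filter.atTop (nhds (xstar, ystar))) :
    (∀ d, xstar d ∈ X d) ∧ (∑ d, A d (xstar d)) = 0 ∧
      (∀ d, ∀ z ∈ X d,
        F xstar + (inner ℝ ystar (A d (xstar d)) : ℝ)
          ≤ F (Function.update xstar d z) + (inner ℝ ystar (A d z) : ℝ)) ∧
      (∀ d d', xstar d = xstar d') :=
  stmt10_general D N M A hA X hXclosed hXconvex ρ F hF hFconv L hL x y hxmem hxupd hres xstar ystar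
    φ hφ hlim
end

section
/- KKT points of the decomposed problem yield stationary points of the relaxation: fix D ≥ 1, a consensus decomposition A_1,…,A_D : ℝ^N → ℝ^M, and nonempty closed convex sets X_1,…,X_D ⊆ ℝ^N with intersection X = X_1 ∩ ⋯ ∩ X_D. Let F : (ℝ^N)^D → ℝ be continuously differentiable and define E : ℝ^N → ℝ by E(x) = F(x, x, …, x). Suppose x* ∈ ℝ^N and y* ∈ ℝ^M are such that x* ∈ X_d for every d and, for every d, ⟨∂_d F(x*,…,x*) + A_dᵀ y*, x − x*⟩ ≥ 0 for all x ∈ X_d, where ∂_d F denotes the partial gradient of F with respect to its d-th block (this variational inequality is the first-order optimality form of the KKT condition that x* minimizes x ↦ F(x*,…,x*,x,x*,…,x*) + ⟨y*, A_d x⟩ over X_d). Then x* is a stationary point of min_{x∈X} E(x): ⟨∇E(x*), x − x*⟩ ≥ 0 for all x ∈ X. -/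
/-- KKT points of the decomposed problem yield stationary points of the
relaxation: if `(x*, y*)` satisfies the blockwise first-order KKT variational
inequalities for the decomposed problem, then `x*` is a stationary point of the
diagonal restriction `E` over `X = ⋂ d, X d`. -/
theorem stmt11 (D N M : ℕ) (hD : 1 ≤ D)
    (A : Fin D → (EuclideanSpace ℝ (Fin N) →L[ℝ] EuclideanSpace ℝ (Fin M)))
    (hA : ∀ x : Fin D → EuclideanSpace ℝ (Fin N),
      (∑ d, A d (x d)) = 0 ↔ ∀ d d', x d = x d')
    (X : Fin D → Set (EuclideanSpace ℝ (Fin N)))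
    (hXne : ∀ d, (X d).Nonempty) (hXclosed : ∀ d, IsClosed (X d))
    (hXconvex : ∀ d, Convex ℝ (X d))
    (F : (Fin D → EuclideanSpace ℝ (Fin N)) → ℝ) (hF : ContDiff ℝ 1 F)
    (E : EuclideanSpace ℝ (Fin N) → ℝ) (hE : ∀ x, E x = F (fun _ => x))
    (xstar : EuclideanSpace ℝ (Fin N)) (ystar : EuclideanSpace ℝ (Fin M))
    (hmem : ∀ d, xstar ∈ X d)
    (hkkt : ∀ d : Fin D, ∀ z ∈ X d,
      0 ≤ (inner ℝ (gradient (fun w => F (Function.update (fun _ => xstar) d w)) xstar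
          + ContinuousLinearMap.adjoint (A d) ystar) (z - xstar) : ℝ)) :
    ∀ z ∈ ⋂ d, X d, 0 ≤ (inner ℝ (gradient E xstar) (z - xstar) : ℝ) := by
  intro z hz
  have hz' : ∀ d, z ∈ X d := by simpa [Set.mem_iInter] using hz
  set v : EuclideanSpace ℝ (Fin N) := z - xstar with hv
  set c : Fin D → EuclideanSpace ℝ (Fin N) := fun _ => xstar with hc
  have hFd : DifferentiableAt ℝ F c := (hF.differentiable one_ne_zero).differentiableAt
  set L : (Fin D → EuclideanSpace ℝ (Fin N)) →L[ℝ] ℝ := fderiv ℝ F c with hLdef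
  have hL : HasFDerivAt F L c := hFd.hasFDerivAt
  -- block derivatives
  have hblock : ∀ d : Fin D,
      HasFDerivAt (fun w => F (Function.update c d w))
        (L.comp (ContinuousLinearMap.pi (Pi.single d (ContinuousLinearMap.id ℝ _)))) xstar := by
    intro d
    have h1 := hasFDerivAt_update (𝕜 := ℝ) c (i := d) xstar
    have h2 : Function.update c d xstar = c := by
      simp [hc, Function.update_eq_self]
    exact (h2 ▸ hL).comp xstar h1
  -- gradient of blocks pair with v as L ∘ single
  have hgb : ∀ d : Fin D,
      (inner ℝ (gradient (fun w => F (Function.update c d w)) xstar) v : ℝ)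
        = L (Pi.single d v) := by
    intro d
    have := (hblock d).fderiv
    rw [gradient, this]
    rw [InnerProductSpace.toDual_symm_apply]
    show L _ = L _
    congr 1
    ext i
    by_cases h : i = d <;> simp [Pi.single_apply, h]
  -- gradient of E pairs with v as L (fun _ => v)
  have hgE : (inner ℝ (gradient E xstar) v : ℝ) = L (fun _ => v) := by
    have hEeq : E = fun x => F (fun _ => x) := funext hE
    set Δ : EuclideanSpace ℝ (Fin N) →L[ℝ] (Fin D → EuclideanSpace ℝ (Fin N)) :=
      ContinuousLinearMap.pi (fun _ : Fin D => ContinuousLinearMap.id ℝ _) with hΔ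
    have hdiag : HasFDerivAt (fun x : EuclideanSpace ℝ (Fin N) => (fun _ : Fin D => x))
        Δ xstar := Δ.hasFDerivAt
    have hEder : HasFDerivAt E (L.comp Δ) xstar := by
      rw [hEeq]
      exact hL.comp xstar hdiag
    rw [gradient, hEder.fderiv, InnerProductSpace.toDual_symm_apply]
    rfl
  -- sum of singles is the diagonal
  have hsingle : (fun _ : Fin D => v) = ∑ d : Fin D, Pi.single d v := by
    rw [← Finset.univ_sum_single (fun _ : Fin D => v)]
  have hsumL : L (fun _ => v) = ∑ d : Fin D, L (Pi.single d v) := by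
    rw [hsingle, map_sum]
  -- adjoint terms vanish in total
  have hAzero : (∑ d, A d v) = 0 := (hA fun _ => v).mpr (fun _ _ => rfl)
  have hadj : (∑ d : Fin D, (inner ℝ (ContinuousLinearMap.adjoint (A d) ystar) v : ℝ)) = 0 := by
    have : ∀ d : Fin D, (inner ℝ (ContinuousLinearMap.adjoint (A d) ystar) v : ℝ)
        = (inner ℝ ystar (A d v) : ℝ) := fun d => ContinuousLinearMap.adjoint_inner_left _ _ _
    simp_rw [this, ← inner_sum, hAzero, inner_zero_right]
  -- sum the KKT inequalities
  have hsum : 0 ≤ ∑ d : Fin D,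
      (inner ℝ (gradient (fun w => F (Function.update c d w)) xstar
        + ContinuousLinearMap.adjoint (A d) ystar) v : ℝ) :=
    Finset.sum_nonneg fun d _ => hkkt d z (hz' d)
  have hexpand : (∑ d : Fin D,
      (inner ℝ (gradient (fun w => F (Function.update c d w)) xstar
        + ContinuousLinearMap.adjoint (A d) ystar) v : ℝ))
      = (inner ℝ (gradient E xstar) v : ℝ) := by
    simp_rw [inner_add_left, Finset.sum_add_distrib, hadj, add_zero, hgb, hgE, hsumL]
  rw [← hexpand]
  exact hsum
end
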